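/- Let S be a finite set in ℝ^d with empirical covariance bounded: Cov[S] ⪯ σ·I, and suppose a subset G ⊆ S with |G| ≥ (α/2)|S| has mean μ_G. Then ‖μ_G - μ_S‖₂ ≤ √(2σ/α). -/

import Mathlib

open Finset
open scoped RealInnerProductSpace Classical

noncomputable def emean {n : ℕ} (A : Finset (EuclideanSpace ℝ (Fin n))) :
    EuclideanSpace ℝ (Fin n) :=
  (A.card : ℝ)⁻¹ • ∑ x ∈ A, x

/-!
Project onto the unit vector `v` in the direction of `d = μ_G - μ_S`. The projections of the
points of `G`, shifted by `μ_S`, have mean `‖d‖`, so by Cauchy–Schwarz their squares sum to at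
least `|G| ‖d‖²`. These squares are part of the directional variance of `S` along `v`, which is
at most `|S| σ`; hence `(α/2) |S| ‖d‖² ≤ |G| ‖d‖² ≤ |S| σ`.
-/

section EmpiricalMean

variable {n : ℕ}

lemma sum_inner_sub_eq_card_mul_inner_emean_sub (G : Finset (EuclideanSpace ℝ (Fin n)))
    (v c : EuclideanSpace ℝ (Fin n)) :
    ∑ x ∈ G, ⟪v, x - c⟫ = G.card * ⟪v, emean G - c⟫ := by
  rcases G.eq_empty_or_nonempty with rfl | hG
  · simp
  have hcard : (G.card : ℝ) ≠ 0 := by positivity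
  simp only [emean, inner_sub_right, sum_sub_distrib, sum_const, nsmul_eq_mul,
    inner_smul_right, inner_sum, mul_sub]
  field_simp

lemma card_mul_inner_emean_sub_sq_le {G S : Finset (EuclideanSpace ℝ (Fin n))} (hG : G ⊆ S)
    (v c : EuclideanSpace ℝ (Fin n)) :
    G.card * ⟪v, emean G - c⟫ ^ 2 ≤ ∑ x ∈ S, ⟪v, x - c⟫ ^ 2 := by
  have hCS : (G.card * ⟪v, emean G - c⟫) ^ 2 ≤ G.card * ∑ x ∈ G, ⟪v, x - c⟫ ^ 2 := by
    rw [← sum_inner_sub_eq_card_mul_inner_emean_sub]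
    exact sq_sum_le_card_mul_sum_sq
  have hsub : ∑ x ∈ G, ⟪v, x - c⟫ ^ 2 ≤ ∑ x ∈ S, ⟪v, x - c⟫ ^ 2 :=
    sum_le_sum_of_subset_of_nonneg hG fun _ _ _ => sq_nonneg _
  rcases G.eq_empty_or_nonempty with rfl | hGne
  · simp only [card_empty, Nat.cast_zero, zero_mul]
    exact sum_nonneg fun x _ => sq_nonneg _
  have hcard : (0 : ℝ) < G.card := by positivity
  nlinarith

end EmpiricalMean

theorem stmt16_general (n : ℕ) (σ α : ℝ) (hα : 0 < α)
    (S G : Finset (EuclideanSpace ℝ (Fin n))) (hS : S.Nonempty) (hG : G ⊆ S)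
    (hGcard : α / 2 * (S.card : ℝ) ≤ (G.card : ℝ))
    (hcov : ∀ v : EuclideanSpace ℝ (Fin n), ‖v‖ = 1 →
      (S.card : ℝ)⁻¹ * ∑ x ∈ S, ⟪v, x - emean S⟫ ^ 2 ≤ σ) :
    ‖emean G - emean S‖ ≤ Real.sqrt (2 * σ / α) := by
  set d := emean G - emean S
  rcases eq_or_ne d 0 with hd | hd
  · rw [hd, norm_zero]
    exact Real.sqrt_nonneg _
  set v : EuclideanSpace ℝ (Fin n) := ‖d‖⁻¹ • d
  have hvd : ⟪v, d⟫ = ‖d‖ := by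
    rw [real_inner_smul_left, real_inner_self_eq_norm_sq]
    field_simp [norm_ne_zero_iff.2 hd]
  have hScard : (0 : ℝ) < S.card := by exact_mod_cast hS.card_pos
  have hvar : ∑ x ∈ S, ⟪v, x - emean S⟫ ^ 2 ≤ S.card * σ :=
    (inv_mul_le_iff₀ hScard).1 (hcov v (norm_smul_inv_norm hd))
  have hGd : G.card * ‖d‖ ^ 2 ≤ S.card * σ :=
    calc G.card * ‖d‖ ^ 2 = G.card * ⟪v, d⟫ ^ 2 := by rw [hvd]
      _ ≤ ∑ x ∈ S, ⟪v, x - emean S⟫ ^ 2 := card_mul_inner_emean_sub_sq_le hG v (emean S)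
      _ ≤ S.card * σ := hvar
  refine Real.le_sqrt_of_sq_le ((le_div_iff₀ hα).2 ?_)
  nlinarith [sq_nonneg ‖d‖]

/-- If a finite set `S` has empirical covariance `⪯ σ·I` and `G ⊆ S` contains at least
an `α/2`-fraction of `S`, then `‖μ_G - μ_S‖₂ ≤ √(2σ/α)`. -/
theorem stmt16 (n : ℕ) (σ α : ℝ) (hσ : 0 ≤ σ) (hα : 0 < α) (hα1 : α ≤ 1)
    (S G : Finset (EuclideanSpace ℝ (Fin n))) (hS : S.Nonempty) (hG : G ⊆ S)
    (hGcard : α / 2 * (S.card : ℝ) ≤ (G.card : ℝ))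
    (hcov : ∀ v : EuclideanSpace ℝ (Fin n), ‖v‖ = 1 →
      (S.card : ℝ)⁻¹ * ∑ x ∈ S, ⟪v, x - emean S⟫ ^ 2 ≤ σ) :
    ‖emean G - emean S‖ ≤ Real.sqrt (2 * σ / α) :=
  stmt16_general n σ α hα S G hS hG hGcard hcov
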